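/- arXiv:1812.08060 — 2 statements merged into one kernel-verified Lean document; each statement's English description precedes it below -/
import Mathlib

section
/- For the sequences f_3, g_3, h_3, t_3, s_3 defined by the Tower of Hanoi d=3 recursion with initial values f_3(0)=1, g_3(0)=0, h_3(0)=1, t_3(0)=0, s_3(0)=3, one has f_3(n) < g_3(n) < h_3(n) < t_3(n) < s_3(n) for all integers n >= 1. -/
/-- One step of the `d = 3` Tower of Hanoi dimer-monomer recursion, sending
`(f, g, h, t, s)` at stage `n` to their values at stage `n + 1`. -/
def TH3Step (v : ℕ × ℕ × ℕ × ℕ × ℕ) : ℕ × ℕ × ℕ × ℕ × ℕ :=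
  let f := v.1; let g := v.2.1; let h := v.2.2.1; let t := v.2.2.2.1; let s := v.2.2.2.2
  let P := f + 3*g + 3*h + t
  let Q := f + 2*g + h
  let R := f + g
  let X := g + 3*h + 3*t + s
  let Y := g + 2*h + t
  let W := g + h
  (P^4 + 6*P^2*Q^2 + 12*P*Q^2*R + 3*Q^4 + 4*P*R^3 + 4*f*Q^3 + 12*Q^2*R^2
      + 12*f*Q*R^2 + 3*R^4 + 6*f^2*R^2 + f^4,
   P^3*X + 3*P*Q^2*X + 3*P^2*Q*Y + 3*P*Q^2*W + 3*Q^2*R*X + 3*Q^3*Y + 6*P*Q*R*Y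
      + R^3*X + 3*f*Q^2*Y + 6*Q*R^2*Y + 3*P*R^2*W + 6*Q^2*R*W + g*Q^3 + 3*f*R^2*Y
      + 6*f*Q*R*W + 3*W*R^3 + 3*g*Q*R^2 + 3*f^2*R*W + 3*f*g*R^2 + f^3*g,
   P^2*X^2 + Q^2*X^2 + 4*P*Q*X*Y + P^2*Y^2 + Q^2*Y^2 + 4*P*Q*Y*W + 2*P*R*Y^2
      + 2*Q^2*Y^2 + 2*Q^2*X*W + 4*Q*R*X*Y + 2*f*Q*Y^2 + 2*g*Q^2*Y + 8*Q*R*Y*W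
      + 2*R^2*X*W + 2*P*R*W^2 + 2*R^2*Y^2 + 2*Q^2*W^2 + 3*R^2*W^2 + 2*f*Q*W^2
      + 4*f*R*Y*W + 4*g*Q*R*W + 2*g*R^2*Y + g^2*R^2 + f^2*W^2 + 4*f*g*R*W + f^2*g^2,
   P*X^3 + 3*P*X*Y^2 + 3*Q*X^2*Y + 3*P*Y^2*W + 3*R*X*Y^2 + 3*Q*Y^3 + 6*Q*X*Y*W
      + P*W^3 + 3*g*Q*Y^2 + 3*R*X*W^2 + 6*R*Y^2*W + 6*Q*Y*W^2 + f*Y^3 + 3*g*Q*W^2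
      + 6*g*R*Y*W + 3*f*Y*W^2 + 3*R*W^3 + 3*g^2*R*W + 3*f*g*W^2 + f*g^3,
   X^4 + 6*X^2*Y^2 + 3*Y^4 + 12*X*Y^2*W + 4*X*W^3 + 4*g*Y^3 + 12*Y^2*W^2 + 3*W^4
      + 12*g*Y*W^2 + 6*g^2*W^2 + g^4)

/-- The sequences `(f_3(n), g_3(n), h_3(n), t_3(n), s_3(n))` with initial values
`(1, 0, 1, 0, 3)`. -/
def TH3Seq : ℕ → ℕ × ℕ × ℕ × ℕ × ℕ
  | 0 => (1, 0, 1, 0, 3)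
  | n + 1 => TH3Step (TH3Seq n)

/-!
Write `u k` for `(P, Q, R, f)` at `k = 0, 1, 2, 3` and `w k` for `(X, Y, W, g)`. Expanding the
recursion shows that the value at stage `n + 1` with index `k` (`f, g, h, t, s` for `k = 0, …, 4`)
is a sum over the subsets `E` of the six edges of `K₄` of `∏ᵢ Uᵢ (deg_E i)`, where `k` of the
four vertices carry `w` and the others `u`. This sum is monotone in every `Uᵢ`, and if
`f < g < h < t < s` then `u ≤ w` pointwise with `0 < u 0 < w 0`, so trading one more `u` for a
`w` strictly increases it.
-/

open Finset

namespace TH3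

/-- `cornerWeight (f, g, h, t) k` is `P, Q, R, f` for `k = 0, 1, 2, 3`. -/
def cornerWeight (x : ℕ → ℕ) (k : ℕ) : ℕ :=
  ∑ j ∈ range (4 - k), (3 - k).choose j * x j

def glueK4 (U : Fin 4 → ℕ → ℕ) : ℕ :=
  ∑ e01 ∈ range 2, ∑ e02 ∈ range 2, ∑ e03 ∈ range 2, ∑ e12 ∈ range 2, ∑ e13 ∈ range 2,
    ∑ e23 ∈ range 2, U 0 (e01 + e02 + e03) * U 1 (e01 + e12 + e13) * U 2 (e02 + e12 + e23) *
      U 3 (e03 + e13 + e23)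

def mixedBlocks (k : ℕ) (u w : ℕ → ℕ) : Fin 4 → ℕ → ℕ :=
  fun i => if (i : ℕ) + k < 4 then u else w

def entry (v : ℕ × ℕ × ℕ × ℕ × ℕ) : ℕ → ℕ
  | 0 => v.1
  | 1 => v.2.1
  | 2 => v.2.2.1
  | 3 => v.2.2.2.1
  | _ => v.2.2.2.2

def IsStrictChain (v : ℕ × ℕ × ℕ × ℕ × ℕ) : Prop :=
  ∀ j < 4, entry v j < entry v (j + 1)

theorem sum_range_two_lt_sum_range_two {M : Type*} [AddCommMonoid M] [PartialOrder M]
    [IsOrderedCancelAddMonoid M] {F G : ℕ → M} (h0 : F 0 < G 0) (h1 : F 1 ≤ G 1) :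
    ∑ a ∈ range 2, F a < ∑ a ∈ range 2, G a := by
  simpa [sum_range_succ] using add_lt_add_of_lt_of_le h0 h1

/-- Only the term with no edges has to increase strictly. -/
theorem glueK4_lt_glueK4 {U V : Fin 4 → ℕ → ℕ} (hle : U ≤ V) (hpos : ∀ i, 0 < U i 0)
    (hlt : ∃ i, U i 0 < V i 0) : glueK4 U < glueK4 V := by
  have hprod : ∏ i, U i 0 < ∏ i, V i 0 :=
    prod_lt_prod (fun i _ => hpos i) (fun i _ => hle i 0) (by simpa using hlt)
  rw [Fin.prod_univ_four, Fin.prod_univ_four] at hprod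
  unfold glueK4
  iterate 5 refine sum_range_two_lt_sum_range_two ?_ (by gcongr <;> apply hle)
  exact sum_range_two_lt_sum_range_two hprod (by gcongr <;> apply hle)

theorem cornerWeight_mono {x y : ℕ → ℕ} (h : ∀ j < 4, x j ≤ y j) (k : ℕ) :
    cornerWeight x k ≤ cornerWeight y k := by
  unfold cornerWeight
  gcongr with j hj
  exact h j (by grind)

theorem cornerWeight_zero_lt {x y : ℕ → ℕ} (h : ∀ j < 4, x j ≤ y j) (h0 : x 0 < y 0) :
    cornerWeight x 0 < cornerWeight y 0 :=
  sum_lt_sum (fun j hj => by gcongr; exact h j (by simpa using hj))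
    ⟨0, by simp, by simpa using h0⟩

theorem cornerWeight_zero_pos {x : ℕ → ℕ} (h : 0 < x 1) : 0 < cornerWeight x 0 :=
  sum_pos' (fun _ _ => Nat.zero_le _) ⟨1, by simp, by simpa using h⟩

theorem mixedBlocks_le_mixedBlocks_succ {u w : ℕ → ℕ} (h : u ≤ w) (k : ℕ) :
    mixedBlocks k u w ≤ mixedBlocks (k + 1) u w := by
  intro i
  unfold mixedBlocks
  split_ifs <;> first | exact le_rfl | exact h | omega

theorem glueK4_mixedBlocks_lt_succ {u w : ℕ → ℕ} (h : u ≤ w) (hu : 0 < u 0) (hlt : u 0 < w 0)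
    {k : ℕ} (hk : k < 4) :
    glueK4 (mixedBlocks k u w) < glueK4 (mixedBlocks (k + 1) u w) := by
  refine glueK4_lt_glueK4 (mixedBlocks_le_mixedBlocks_succ h k) (fun i => ?_)
    ⟨⟨3 - k, by omega⟩, ?_⟩
  · unfold mixedBlocks
    split_ifs <;> omega
  · simp only [mixedBlocks]
    rw [if_pos (by omega), if_neg (by omega)]
    exact hlt

theorem entry_TH3Step (v : ℕ × ℕ × ℕ × ℕ × ℕ) {k : ℕ} (hk : k ≤ 4) :
    entry (TH3Step v) k =
      glueK4 (mixedBlocks k (cornerWeight (entry v)) (cornerWeight fun j => entry v (j + 1))) := by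
  obtain ⟨f, g, h, t, s⟩ := v
  interval_cases k <;>
    simp [glueK4, mixedBlocks, cornerWeight, sum_range_succ, entry, TH3Step, Nat.choose] <;> ring

theorem IsStrictChain.step {v : ℕ × ℕ × ℕ × ℕ × ℕ} (hv : IsStrictChain v) :
    IsStrictChain (TH3Step v) := by
  intro k hk
  have hle : ∀ j < 4, entry v j ≤ entry v (j + 1) := fun j hj => (hv j hj).le
  have h01 : entry v 0 < entry v 1 := hv 0 (by norm_num)
  rw [entry_TH3Step v hk.le, entry_TH3Step v hk]
  exact glueK4_mixedBlocks_lt_succ (cornerWeight_mono hle)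
    (cornerWeight_zero_pos (Nat.zero_lt_of_lt h01)) (cornerWeight_zero_lt hle h01) hk

theorem isStrictChain_TH3Seq {n : ℕ} (hn : 1 ≤ n) : IsStrictChain (TH3Seq n) := by
  induction n, hn using Nat.le_induction with
  | base => unfold IsStrictChain; decide
  | succ n _ ih => exact ih.step

end TH3

/-- For the Tower of Hanoi `d = 3` sequences, `f_3(n) < g_3(n) < h_3(n) < t_3(n) < s_3(n)`
for all `n ≥ 1`. -/
theorem TH3_strict_ordering (n : ℕ) (hn : 1 ≤ n) :
    (TH3Seq n).1 < (TH3Seq n).2.1 ∧ (TH3Seq n).2.1 < (TH3Seq n).2.2.1 ∧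
    (TH3Seq n).2.2.1 < (TH3Seq n).2.2.2.1 ∧ (TH3Seq n).2.2.2.1 < (TH3Seq n).2.2.2.2 :=
  have h := TH3.isStrictChain_TH3Seq hn
  ⟨h 0 (by norm_num), h 1 (by norm_num), h 2 (by norm_num), h 3 (by norm_num)⟩
end

section
/- Let s_3 and M_3 be the Tower of Hanoi d=3 sequences (defined by the stated recursion with initial values f_3(0)=1, g_3(0)=0, h_3(0)=1, t_3(0)=0, s_3(0)=3, M_3(n)=f_3(n)+4g_3(n)+6h_3(n)+4t_3(n)+s_3(n)), and let alpha_3(n)=f_3(n)/g_3(n), omega_3(n)=t_3(n)/s_3(n). Then for all integers 1 <= k <= n: s_3(k)^(4^(n-k)) * (1+2*omega_3(k)+2*omega_3(k)^2)^(2*(4^(n-k)-1)) * (1+omega_3(n))^4 < M_3(n) < s_3(k)^(4^(n-k)) * (1+2*alpha_3(k)+2*alpha_3(k)^2)^(2*(4^(n-k)-1)) * (1+alpha_3(n))^4, provided 0 < omega_3(m) <= gamma_3(m) <= beta_3(m) <= alpha_3(m) < 1 for all m with k <= m <= n, where beta_3 = g_3/h_3 and gamma_3 = h_3/t_3, and omega_3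 is monotonically increasing while alpha_3 is monotonically decreasing on [k, n]. -/
/-- `f_3(n)` etc. as real numbers, and the ratios of consecutive counts. -/
noncomputable def f3 (n : ℕ) : ℝ := ((TH3Seq n).1 : ℝ)
noncomputable def g3 (n : ℕ) : ℝ := ((TH3Seq n).2.1 : ℝ)
noncomputable def h3 (n : ℕ) : ℝ := ((TH3Seq n).2.2.1 : ℝ)
noncomputable def t3 (n : ℕ) : ℝ := ((TH3Seq n).2.2.2.1 : ℝ)
noncomputable def s3 (n : ℕ) : ℝ := ((TH3Seq n).2.2.2.2 : ℝ)
noncomputable def M3 (n : ℕ) : ℝ := f3 n + 4 * g3 n + 6 * h3 n + 4 * t3 n + s3 n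
noncomputable def α3 (n : ℕ) : ℝ := f3 n / g3 n
noncomputable def β3 (n : ℕ) : ℝ := g3 n / h3 n
noncomputable def γ3 (n : ℕ) : ℝ := h3 n / t3 n
noncomputable def ω3 (n : ℕ) : ℝ := t3 n / s3 n

/-!
Under the ratio ordering, the state `(f, g, h, t, s)` at stage `m` is squeezed coordinatewise
between the geometric states `s (ω⁴, ω³, ω², ω, 1)` and `s (α⁴, α³, α², α, 1)`. The recursion
for `s` is monotone in `g, h, t`, and on a geometric state with ratio `x` it factors as
`s ↦ s⁴ (1 + 2x + 2x²)⁶`. Since `ω` increases and `α` decreases, iterating from `k` gives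
`s(n)` up to the factors `(1 + 2x + 2x²)^(2(4^(n-k) - 1))`, and `M = f + 4g + 6h + 4t + s` lies
between `s(1 + ω)⁴` and `s(1 + α)⁴`. Both inequalities are strict because `t² ≠ h s`: modulo 2
the state alternates between `(1, 0, 1, 0, 1)` and `(0, 0, 0, 1, 1)`.
-/

section Telescoping

variable {R : Type*} [CommSemiring R] [LinearOrder R] [IsStrictOrderedRing R]

theorem pow_pow_le_of_pow_le_succ {u : ℕ → R} {p N : ℕ} (h0 : 0 ≤ u 0)
    (h : ∀ i < N, u i ^ p ≤ u (i + 1)) : u 0 ^ p ^ N ≤ u N := by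
  induction N with
  | zero => simp
  | succ N ih =>
    calc u 0 ^ p ^ (N + 1) = (u 0 ^ p ^ N) ^ p := by rw [pow_succ, pow_mul]
      _ ≤ u N ^ p := pow_le_pow_left₀ (pow_nonneg h0 _) (ih fun i hi ↦ h i (by omega)) p
      _ ≤ u (N + 1) := h N N.lt_succ_self

theorem le_pow_pow_of_le_pow_succ {u : ℕ → R} {p N : ℕ} (hu : ∀ i, 0 ≤ u i)
    (h : ∀ i < N, u (i + 1) ≤ u i ^ p) : u N ≤ u 0 ^ p ^ N := by
  induction N with
  | zero => simp
  | succ N ih =>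
    calc u (N + 1) ≤ u N ^ p := h N N.lt_succ_self
      _ ≤ (u 0 ^ p ^ N) ^ p := pow_le_pow_left₀ (hu N) (ih fun i hi ↦ h i (by omega)) p
      _ = u 0 ^ p ^ (N + 1) := by rw [pow_succ, pow_mul]

/-- Rescaled by `b`, the hypothesis reads `(a i * b) ^ p ≤ a (i + 1) * b`. -/
theorem pow_mul_pow_le_of_pow_mul_le_succ {a : ℕ → R} {b : R} {p N : ℕ} (hp : p ≠ 0)
    (hb : 0 < b) (h0 : 0 ≤ a 0) (h : ∀ i < N, a i ^ p * b ^ (p - 1) ≤ a (i + 1)) :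
    a 0 ^ p ^ N * b ^ (p ^ N - 1) ≤ a N := by
  have key := pow_pow_le_of_pow_le_succ (u := fun i ↦ a i * b) (p := p) (N := N)
    (mul_nonneg h0 hb.le) fun i hi ↦ by
      rw [mul_pow, ← pow_sub_one_mul hp b, ← mul_assoc]
      exact mul_le_mul_of_nonneg_right (h i hi) hb.le
  rw [mul_pow, ← pow_sub_one_mul (pow_ne_zero N hp) b, ← mul_assoc] at key
  exact le_of_mul_le_mul_right key hb

theorem le_pow_mul_pow_of_le_pow_mul_succ {a : ℕ → R} {b : R} {p N : ℕ} (hp : p ≠ 0)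
    (hb : 0 < b) (ha : ∀ i, 0 ≤ a i) (h : ∀ i < N, a (i + 1) ≤ a i ^ p * b ^ (p - 1)) :
    a N ≤ a 0 ^ p ^ N * b ^ (p ^ N - 1) := by
  have key := le_pow_pow_of_le_pow_succ (u := fun i ↦ a i * b) (p := p) (N := N)
    (fun i ↦ mul_nonneg (ha i) hb.le) fun i hi ↦ by
      rw [mul_pow, ← pow_sub_one_mul hp b, ← mul_assoc]
      exact mul_le_mul_of_nonneg_right (h i hi) hb.le
  rw [mul_pow, ← pow_sub_one_mul (pow_ne_zero N hp) b, ← mul_assoc] at key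
  exact le_of_mul_le_mul_right key hb

end Telescoping

theorem rel_of_forall_rel_succ_of_le_of_le_of_le {β : Type*} (r : β → β → Prop) [Std.Refl r]
    [IsTrans β r] {u : ℕ → β} {k n : ℕ} (h : ∀ m, k ≤ m → m < n → r (u m) (u (m + 1)))
    {m : ℕ} (hkm : k ≤ m) (hmn : m ≤ n) : r (u k) (u m) := by
  induction m, hkm using Nat.le_induction with
  | base => exact refl _
  | succ m hkm ih => exact _root_.trans (ih (by omega)) (h m hkm hmn)

def sNext (g h t s : ℝ) : ℝ :=
  (g + 3*h + 3*t + s)^4 + 6*(g + 3*h + 3*t + s)^2*(g + 2*h + t)^2 + 3*(g + 2*h + t)^4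
    + 12*(g + 3*h + 3*t + s)*(g + 2*h + t)^2*(g + h) + 4*(g + 3*h + 3*t + s)*(g + h)^3
    + 4*g*(g + 2*h + t)^3 + 12*(g + 2*h + t)^2*(g + h)^2 + 3*(g + h)^4
    + 12*g*(g + 2*h + t)*(g + h)^2 + 6*g^2*(g + h)^2 + g^4

theorem sNext_le_sNext {g h t s g' h' t' : ℝ} (hg : 0 ≤ g) (hh : 0 ≤ h) (ht : 0 ≤ t)
    (hs : 0 ≤ s) (hgg' : g ≤ g') (hhh' : h ≤ h') (htt' : t ≤ t') :
    sNext g h t s ≤ sNext g' h' t' s := by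
  have hg' := hg.trans hgg'
  have hh' := hh.trans hhh'
  have ht' := ht.trans htt'
  unfold sNext
  gcongr

theorem sNext_geometric (s w : ℝ) :
    sNext (s * w ^ 3) (s * w ^ 2) (s * w) s = s ^ 4 * (1 + 2 * w + 2 * w ^ 2) ^ 6 := by
  unfold sNext
  ring

theorem s3_succ (m : ℕ) : s3 (m + 1) = sNext (g3 m) (h3 m) (t3 m) (s3 m) := by
  simp only [s3, g3, h3, t3, TH3Seq, TH3Step, sNext]
  push_cast
  ring

theorem TH3Seq_mod_two (m : ℕ) : ∃ a : ZMod 2,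
    ((TH3Seq m).1 : ZMod 2) = a ∧ ((TH3Seq m).2.1 : ZMod 2) = 0 ∧
    ((TH3Seq m).2.2.1 : ZMod 2) = a ∧ ((TH3Seq m).2.2.2.1 : ZMod 2) = a + 1 ∧
    ((TH3Seq m).2.2.2.2 : ZMod 2) = 1 := by
  induction m with
  | zero => exact ⟨1, by decide⟩
  | succ m ih =>
    obtain ⟨a, hf, hg, hh, ht, hs⟩ := ih
    refine ⟨a + 1, ?_⟩
    simp only [TH3Seq, TH3Step]
    push_cast
    rw [hf, hg, hh, ht, hs]
    clear hf hg hh ht hs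
    revert a
    decide

theorem t3_sq_ne_h3_mul_s3 (m : ℕ) : t3 m ^ 2 ≠ h3 m * s3 m := by
  obtain ⟨a, -, -, hh, ht, hs⟩ := TH3Seq_mod_two m
  have key : ((TH3Seq m).2.2.2.1 : ZMod 2) ^ 2 ≠ (TH3Seq m).2.2.1 * (TH3Seq m).2.2.2.2 := by
    rw [hh, ht, hs]
    clear hh ht hs
    revert a
    decide
  intro heq
  have hnat : (TH3Seq m).2.2.2.1 ^ 2 = (TH3Seq m).2.2.1 * (TH3Seq m).2.2.2.2 := by
    simp only [t3, h3, s3] at heq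
    exact_mod_cast heq
  exact key (by exact_mod_cast congrArg (Nat.cast : ℕ → ZMod 2) hnat)

structure RatioChain (f g h t s : ℝ) : Prop where
  s_nonneg : 0 ≤ s
  ω_pos : 0 < t / s
  ω_le_γ : t / s ≤ h / t
  γ_le_β : h / t ≤ g / h
  β_le_α : g / h ≤ f / g

namespace RatioChain

variable {f g h t s : ℝ}

theorem s_pos (c : RatioChain f g h t s) : 0 < s := by
  rcases div_pos_iff.1 c.ω_pos with ⟨-, hs⟩ | ⟨-, hs⟩
  exacts [hs, absurd c.s_nonneg hs.not_ge]

theorem t_pos (c : RatioChain f g h t s) : 0 < t :=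
  (div_pos_iff_of_pos_right c.s_pos).1 c.ω_pos

theorem h_pos (c : RatioChain f g h t s) : 0 < h :=
  (div_pos_iff_of_pos_right c.t_pos).1 (c.ω_pos.trans_le c.ω_le_γ)

theorem g_pos (c : RatioChain f g h t s) : 0 < g :=
  (div_pos_iff_of_pos_right c.h_pos).1 ((c.ω_pos.trans_le c.ω_le_γ).trans_le c.γ_le_β)

theorem α_pos (c : RatioChain f g h t s) : 0 < f / g :=
  ((c.ω_pos.trans_le c.ω_le_γ).trans_le c.γ_le_β).trans_le c.β_le_α

theorem mul_ω_eq (c : RatioChain f g h t s) : s * (t / s) = t :=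
  mul_div_cancel₀ t c.s_pos.ne'

theorem mul_ω_sq_le (c : RatioChain f g h t s) : s * (t / s) ^ 2 ≤ h :=
  calc s * (t / s) ^ 2 = t / s * (s * (t / s)) := by ring
    _ = t / s * t := by rw [c.mul_ω_eq]
    _ ≤ h := (le_div_iff₀ c.t_pos).1 c.ω_le_γ

theorem mul_ω_pow_three_le (c : RatioChain f g h t s) : s * (t / s) ^ 3 ≤ g :=
  calc s * (t / s) ^ 3 = t / s * (s * (t / s) ^ 2) := by ring
    _ ≤ t / s * h := mul_le_mul_of_nonneg_left c.mul_ω_sq_le c.ω_pos.le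
    _ ≤ g := (le_div_iff₀ c.h_pos).1 (c.ω_le_γ.trans c.γ_le_β)

theorem mul_ω_pow_four_le (c : RatioChain f g h t s) : s * (t / s) ^ 4 ≤ f :=
  calc s * (t / s) ^ 4 = t / s * (s * (t / s) ^ 3) := by ring
    _ ≤ t / s * g := mul_le_mul_of_nonneg_left c.mul_ω_pow_three_le c.ω_pos.le
    _ ≤ f := (le_div_iff₀ c.g_pos).1 ((c.ω_le_γ.trans c.γ_le_β).trans c.β_le_α)

theorem le_mul_α (c : RatioChain f g h t s) : t ≤ s * (f / g) :=
  calc t ≤ f / g * s := (div_le_iff₀ c.s_pos).1 ((c.ω_le_γ.trans c.γ_le_β).trans c.β_le_α)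
    _ = s * (f / g) := mul_comm _ _

theorem le_mul_α_sq (c : RatioChain f g h t s) : h ≤ s * (f / g) ^ 2 :=
  calc h ≤ f / g * t := (div_le_iff₀ c.t_pos).1 (c.γ_le_β.trans c.β_le_α)
    _ ≤ f / g * (s * (f / g)) := mul_le_mul_of_nonneg_left c.le_mul_α c.α_pos.le
    _ = s * (f / g) ^ 2 := by ring

theorem le_mul_α_pow_three (c : RatioChain f g h t s) : g ≤ s * (f / g) ^ 3 :=
  calc g ≤ f / g * h := (div_le_iff₀ c.h_pos).1 c.β_le_α
    _ ≤ f / g * (s * (f / g) ^ 2) := mul_le_mul_of_nonneg_left c.le_mul_α_sq c.α_pos.le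
    _ = s * (f / g) ^ 3 := by ring

theorem le_mul_α_pow_four (c : RatioChain f g h t s) : f ≤ s * (f / g) ^ 4 :=
  calc f = f / g * g := (div_mul_cancel₀ f c.g_pos.ne').symm
    _ ≤ f / g * (s * (f / g) ^ 3) := mul_le_mul_of_nonneg_left c.le_mul_α_pow_three c.α_pos.le
    _ = s * (f / g) ^ 4 := by ring

theorem pow_four_mul_le_sNext (c : RatioChain f g h t s) :
    s ^ 4 * (1 + 2 * (t / s) + 2 * (t / s) ^ 2) ^ 6 ≤ sNext g h t s := by
  rw [← sNext_geometric]
  have hω := c.ω_pos.le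
  exact sNext_le_sNext (mul_nonneg c.s_nonneg (pow_nonneg hω 3))
    (mul_nonneg c.s_nonneg (pow_nonneg hω 2)) (mul_nonneg c.s_nonneg hω) c.s_nonneg
    c.mul_ω_pow_three_le c.mul_ω_sq_le c.mul_ω_eq.le

theorem sNext_le_pow_four_mul (c : RatioChain f g h t s) :
    sNext g h t s ≤ s ^ 4 * (1 + 2 * (f / g) + 2 * (f / g) ^ 2) ^ 6 := by
  rw [← sNext_geometric]
  exact sNext_le_sNext c.g_pos.le c.h_pos.le c.t_pos.le c.s_nonneg
    c.le_mul_α_pow_three c.le_mul_α_sq c.le_mul_α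

theorem mul_ω_sq_lt (c : RatioChain f g h t s) (hne : t ^ 2 ≠ h * s) : s * (t / s) ^ 2 < h := by
  refine c.mul_ω_sq_le.lt_of_ne fun heq ↦ hne ?_
  rw [← heq]
  field_simp [c.s_pos.ne']

theorem ω_lt_α (c : RatioChain f g h t s) (hne : t ^ 2 ≠ h * s) : t / s < f / g := by
  have hsq : s * (t / s) ^ 2 < s * (f / g) ^ 2 := (c.mul_ω_sq_lt hne).trans_le c.le_mul_α_sq
  exact lt_of_pow_lt_pow_left₀ 2 c.α_pos.le (lt_of_mul_lt_mul_left hsq c.s_nonneg)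

theorem mul_one_add_ω_pow_four_lt (c : RatioChain f g h t s) (hne : t ^ 2 ≠ h * s) :
    s * (1 + t / s) ^ 4 < f + 4 * g + 6 * h + 4 * t + s := by
  have hexpand : s * (1 + t / s) ^ 4 = s * (t / s) ^ 4 + 4 * (s * (t / s) ^ 3)
      + 6 * (s * (t / s) ^ 2) + 4 * (s * (t / s)) + s := by ring
  linarith [c.mul_ω_pow_four_le, c.mul_ω_pow_three_le, c.mul_ω_sq_lt hne, c.mul_ω_eq]

theorem lt_mul_one_add_α_pow_four (c : RatioChain f g h t s) (hne : t ^ 2 ≠ h * s) :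
    f + 4 * g + 6 * h + 4 * t + s < s * (1 + f / g) ^ 4 := by
  have hexpand : s * (1 + f / g) ^ 4 = s * (f / g) ^ 4 + 4 * (s * (f / g) ^ 3)
      + 6 * (s * (f / g) ^ 2) + 4 * (s * (f / g)) + s := by ring
  have ht : t < s * (f / g) := c.mul_ω_eq ▸ mul_lt_mul_of_pos_left (c.ω_lt_α hne) c.s_pos
  linarith [c.le_mul_α_pow_four, c.le_mul_α_pow_three, c.le_mul_α_sq]

end RatioChain

theorem s3_pow_mul_le_s3 {k n : ℕ} {c : ℝ} (hkn : k ≤ n) (hc : 0 ≤ c)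
    (hchain : ∀ m, k ≤ m → m < n → RatioChain (f3 m) (g3 m) (h3 m) (t3 m) (s3 m))
    (hcω : ∀ m, k ≤ m → m < n → c ≤ ω3 m) :
    s3 k ^ 4 ^ (n - k) * (1 + 2 * c + 2 * c ^ 2) ^ (2 * (4 ^ (n - k) - 1)) ≤ s3 n := by
  obtain ⟨N, rfl⟩ := Nat.exists_eq_add_of_le hkn
  rw [Nat.add_sub_cancel_left, pow_mul]
  refine pow_mul_pow_le_of_pow_mul_le_succ (a := fun i ↦ s3 (k + i)) four_ne_zero
    (by positivity) (Nat.cast_nonneg _) fun i hi ↦ ?_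
  have hci := hchain (k + i) (by omega) (by omega)
  have hcωi := hcω (k + i) (by omega) (by omega)
  calc s3 (k + i) ^ 4 * ((1 + 2 * c + 2 * c ^ 2) ^ 2) ^ (4 - 1)
      = s3 (k + i) ^ 4 * (1 + 2 * c + 2 * c ^ 2) ^ 6 := by ring
    _ ≤ s3 (k + i) ^ 4 * (1 + 2 * ω3 (k + i) + 2 * ω3 (k + i) ^ 2) ^ 6 := by gcongr
    _ ≤ s3 (k + i + 1) := s3_succ (k + i) ▸ hci.pow_four_mul_le_sNext

theorem s3_le_s3_pow_mul {k n : ℕ} {c : ℝ} (hkn : k ≤ n)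
    (hchain : ∀ m, k ≤ m → m < n → RatioChain (f3 m) (g3 m) (h3 m) (t3 m) (s3 m))
    (hαc : ∀ m, k ≤ m → m < n → α3 m ≤ c) :
    s3 n ≤ s3 k ^ 4 ^ (n - k) * (1 + 2 * c + 2 * c ^ 2) ^ (2 * (4 ^ (n - k) - 1)) := by
  obtain ⟨N, rfl⟩ := Nat.exists_eq_add_of_le hkn
  rw [Nat.add_sub_cancel_left, pow_mul]
  have hq : 0 < 1 + 2 * c + 2 * c ^ 2 := by nlinarith [sq_nonneg (2 * c + 1)]
  refine le_pow_mul_pow_of_le_pow_mul_succ (a := fun i ↦ s3 (k + i)) four_ne_zero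
    (by positivity) (fun _ ↦ Nat.cast_nonneg _) fun i hi ↦ ?_
  have hci := hchain (k + i) (by omega) (by omega)
  have hαci := hαc (k + i) (by omega) (by omega)
  have hα : 0 ≤ α3 (k + i) := hci.α_pos.le
  calc s3 (k + i + 1)
      ≤ s3 (k + i) ^ 4 * (1 + 2 * α3 (k + i) + 2 * α3 (k + i) ^ 2) ^ 6 :=
        s3_succ (k + i) ▸ hci.sNext_le_pow_four_mul
    _ ≤ s3 (k + i) ^ 4 * (1 + 2 * c + 2 * c ^ 2) ^ 6 := by gcongr
    _ = s3 (k + i) ^ 4 * ((1 + 2 * c + 2 * c ^ 2) ^ 2) ^ (4 - 1) := by ring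

theorem TH3_dimer_monomer_bounds_general (k n : ℕ) (hkn : k ≤ n)
    (hord : ∀ m, k ≤ m → m ≤ n →
      0 < ω3 m ∧ ω3 m ≤ γ3 m ∧ γ3 m ≤ β3 m ∧ β3 m ≤ α3 m ∧ α3 m < 1)
    (hmono : ∀ m, k ≤ m → m < n → ω3 m ≤ ω3 (m + 1) ∧ α3 (m + 1) ≤ α3 m) :
    s3 k ^ (4 ^ (n - k)) * (1 + 2 * ω3 k + 2 * (ω3 k) ^ 2) ^ (2 * (4 ^ (n - k) - 1))
        * (1 + ω3 n) ^ 4 < M3 n ∧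
    M3 n < s3 k ^ (4 ^ (n - k)) * (1 + 2 * α3 k + 2 * (α3 k) ^ 2) ^ (2 * (4 ^ (n - k) - 1))
        * (1 + α3 n) ^ 4 := by
  have hchain (m : ℕ) (hkm : k ≤ m) (hmn : m ≤ n) :
      RatioChain (f3 m) (g3 m) (h3 m) (t3 m) (s3 m) :=
    let ⟨hω, hωγ, hγβ, hβα, _⟩ := hord m hkm hmn
    ⟨Nat.cast_nonneg _, hω, hωγ, hγβ, hβα⟩
  have hω (m : ℕ) (hkm : k ≤ m) (hmn : m < n) : ω3 k ≤ ω3 m :=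
    rel_of_forall_rel_succ_of_le_of_le_of_le (· ≤ ·) (fun m h₁ h₂ ↦ (hmono m h₁ h₂).1) hkm hmn.le
  have hα (m : ℕ) (hkm : k ≤ m) (hmn : m < n) : α3 m ≤ α3 k :=
    rel_of_forall_rel_succ_of_le_of_le_of_le (· ≥ ·) (fun m h₁ h₂ ↦ (hmono m h₁ h₂).2) hkm hmn.le
  have hchain_lt (m : ℕ) (hkm : k ≤ m) (hmn : m < n) := hchain m hkm hmn.le
  have hn := hchain n hkn le_rfl
  have hne := t3_sq_ne_h3_mul_s3 n
  constructor
  · calc _ ≤ s3 n * (1 + ω3 n) ^ 4 := by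
          gcongr
          exact s3_pow_mul_le_s3 hkn (hchain k le_rfl hkn).ω_pos.le hchain_lt hω
      _ < M3 n := hn.mul_one_add_ω_pow_four_lt hne
  · calc M3 n < s3 n * (1 + α3 n) ^ 4 := hn.lt_mul_one_add_α_pow_four hne
      _ ≤ _ := by
          gcongr
          exact s3_le_s3_pow_mul hkn hchain_lt hα

/-- Lemma 3 of the paper: for `1 ≤ k ≤ n`, assuming the ratio ordering
`0 < ω_3(m) ≤ γ_3(m) ≤ β_3(m) ≤ α_3(m) < 1` on `[k, n]`, with `ω_3` increasing and
`α_3` decreasing there, the number of dimer-monomers `M_3(n)` satisfies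
`s_3(k)^(4^(n-k)) (1+2ω_3(k)+2ω_3(k)²)^(2(4^(n-k)-1)) (1+ω_3(n))⁴ < M_3(n) <
 s_3(k)^(4^(n-k)) (1+2α_3(k)+2α_3(k)²)^(2(4^(n-k)-1)) (1+α_3(n))⁴`. -/
theorem TH3_dimer_monomer_bounds (k n : ℕ) (hk : 1 ≤ k) (hkn : k ≤ n)
    (hord : ∀ m, k ≤ m → m ≤ n →
      0 < ω3 m ∧ ω3 m ≤ γ3 m ∧ γ3 m ≤ β3 m ∧ β3 m ≤ α3 m ∧ α3 m < 1)
    (hmono : ∀ m, k ≤ m → m < n → ω3 m ≤ ω3 (m + 1) ∧ α3 (m + 1) ≤ α3 m) :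
    s3 k ^ (4 ^ (n - k)) * (1 + 2 * ω3 k + 2 * (ω3 k) ^ 2) ^ (2 * (4 ^ (n - k) - 1))
        * (1 + ω3 n) ^ 4 < M3 n ∧
    M3 n < s3 k ^ (4 ^ (n - k)) * (1 + 2 * α3 k + 2 * (α3 k) ^ 2) ^ (2 * (4 ^ (n - k) - 1))
        * (1 + α3 n) ^ 4 :=
  TH3_dimer_monomer_bounds_general k n hkn hord hmono
end
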